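/- Let P, P̂ be Borel probability measures on a compact metric space 𝒴 and let ℋ be a universal RKHS on 𝒴 (i.e., ℋ is dense in C(𝒴) with respect to the sup norm) with bounded feature map Φ. If ‖Φ(P̂ₙ) − Φ(P)‖_ℋ → 0 as n → ∞ for a sequence of probability measures P̂ₙ, then ∫ f dP̂ₙ → ∫ f dP for every continuous function f : 𝒴 → ℝ, i.e., P̂ₙ converges weakly to P. -/

import Mathlib

/-!
Integration against a probability measure is a 1-Lipschitz functional on `C(𝒴, ℝ)`, so the
functions `g` with `∫ g dP̂ₙ → ∫ g dP` form a closed set. For `g = ⟪h, Φ ·⟫` the integral is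
`⟪h, Φ(Q)⟫`, so MMD convergence puts these functions in that set, and universality says they
are dense.
-/

open MeasureTheory Filter Topology BoundedContinuousFunction

section

variable {X : Type*} [TopologicalSpace X] [CompactSpace X]

theorem ContinuousMap.lipschitzWith_one_integral [MeasurableSpace X] [OpensMeasurableSpace X]
    (μ : Measure X) [IsProbabilityMeasure μ] :
    LipschitzWith 1 fun g : C(X, ℝ) ↦ ∫ x, g x ∂μ := by
  refine LipschitzWith.of_dist_le_mul fun f g ↦ ?_
  rw [NNReal.coe_one, one_mul, ← dist_mkOfCompact, dist_eq_norm, dist_eq_norm,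
    ← integral_sub (f := ⇑f) (g := ⇑g) ((mkOfCompact f).integrable μ)
      ((mkOfCompact g).integrable μ)]
  exact (mkOfCompact f - mkOfCompact g).norm_integral_le_norm μ

theorem ContinuousMap.tendsto_integral_of_denseRange [MeasurableSpace X]
    [OpensMeasurableSpace X] {ι ι' : Type*} {l : Filter ι} {μs : ι → Measure X}
    [∀ i, IsProbabilityMeasure (μs i)] {μ : Measure X} [IsProbabilityMeasure μ]
    {F : ι' → C(X, ℝ)} (hF : DenseRange F)
    (hconv : ∀ j, Tendsto (fun i ↦ ∫ x, F j x ∂μs i) l (𝓝 (∫ x, F j x ∂μ))) (g : C(X, ℝ)) :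
    Tendsto (fun i ↦ ∫ x, g x ∂μs i) l (𝓝 (∫ x, g x ∂μ)) :=
  hF.induction_on g
    ((LipschitzWith.uniformEquicontinuous _ 1 fun i ↦
      lipschitzWith_one_integral (μs i)).equicontinuous.isClosed_setOfPred_tendsto
      (lipschitzWith_one_integral μ).continuous)
    hconv

variable {H : Type*} [NormedAddCommGroup H] [InnerProductSpace ℝ H]

def rkhsFunction (Φ : C(X, H)) (h : H) : C(X, ℝ) :=
  ⟨fun y ↦ inner ℝ h (Φ y), continuous_const.inner Φ.continuous⟩

theorem denseRange_rkhsFunction (Φ : C(X, H))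
    (huniversal : ∀ (g : C(X, ℝ)) (ε : ℝ), 0 < ε →
      ∃ h : H, ∀ y, |(inner ℝ h (Φ y) : ℝ) - g y| < ε) :
    DenseRange (rkhsFunction Φ) := by
  refine Metric.denseRange_iff.2 fun g ε hε ↦ ?_
  obtain ⟨h, hh⟩ := huniversal g (ε / 2) (half_pos hε)
  refine ⟨h, ((ContinuousMap.dist_le (half_pos hε).le).2 fun y ↦ ?_).trans_lt (half_lt_self hε)⟩
  rw [dist_comm, Real.dist_eq]
  exact (hh y).le

theorem integral_rkhsFunction [CompleteSpace H] [MeasurableSpace X] [OpensMeasurableSpace X]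
    (Φ : C(X, H)) (h : H) (μ : Measure X) [IsFiniteMeasure μ] :
    ∫ x, rkhsFunction Φ h x ∂μ = inner ℝ h (∫ x, Φ x ∂μ) :=
  integral_inner (Φ.continuous.integrable_of_hasCompactSupport (.of_compactSpace _)) h

theorem tendsto_integral_rkhsFunction [CompleteSpace H] [MeasurableSpace X]
    [OpensMeasurableSpace X] {ι : Type*} {l : Filter ι} {μs : ι → Measure X}
    [∀ i, IsFiniteMeasure (μs i)] {μ : Measure X} [IsFiniteMeasure μ] (Φ : C(X, H))
    (hmean : Tendsto (fun i ↦ ∫ x, Φ x ∂μs i) l (𝓝 (∫ x, Φ x ∂μ))) (h : H) :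
    Tendsto (fun i ↦ ∫ x, rkhsFunction Φ h x ∂μs i) l (𝓝 (∫ x, rkhsFunction Φ h x ∂μ)) := by
  simp only [integral_rkhsFunction]
  exact tendsto_const_nhds.inner hmean

end

theorem weak_convergence_of_mmd_tendsto_zero_general
    {𝒴 : Type*} [MetricSpace 𝒴] [CompactSpace 𝒴] [MeasurableSpace 𝒴] [BorelSpace 𝒴]
    {H : Type*} [NormedAddCommGroup H] [InnerProductSpace ℝ H] [CompleteSpace H]
    (Φ : 𝒴 → H) (hΦcont : Continuous Φ) (C : ℝ)
    (huniversal : ∀ (g : C(𝒴, ℝ)) (ε : ℝ), 0 < ε →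
      ∃ f : H, ∀ y, |(inner ℝ f (Φ y) : ℝ) - g y| < ε)
    (P : Measure 𝒴) [IsProbabilityMeasure P]
    (Pn : ℕ → Measure 𝒴) [∀ n, IsProbabilityMeasure (Pn n)]
    (hmmd : Tendsto (fun n => ‖(∫ y, Φ y ∂(Pn n)) - ∫ y, Φ y ∂P‖) atTop (nhds 0)) :
    ∀ f : C(𝒴, ℝ),
      Tendsto (fun n => ∫ y, f y ∂(Pn n)) atTop (nhds (∫ y, f y ∂P)) := by
  let Ψ : C(𝒴, H) := ⟨Φ, hΦcont⟩
  have hmean : Tendsto (fun n ↦ ∫ y, Ψ y ∂Pn n) atTop (𝓝 (∫ y, Ψ y ∂P)) :=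
    tendsto_iff_norm_sub_tendsto_zero.2 hmmd
  exact ContinuousMap.tendsto_integral_of_denseRange (denseRange_rkhsFunction Ψ huniversal)
    (tendsto_integral_rkhsFunction Ψ hmean)

/-- If `ℋ` is a universal RKHS on a compact metric space `𝒴` (every continuous function is
a uniform limit of RKHS functions `y ↦ ⟪f, Φ y⟫`) with bounded feature map `Φ`, and the
MMD `‖Φ(P̂ₙ) − Φ(P)‖ → 0`, then `∫ f dP̂ₙ → ∫ f dP` for every continuous `f`, i.e., `P̂ₙ`
converges weakly to `P`. -/
theorem weak_convergence_of_mmd_tendsto_zero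
    {𝒴 : Type*} [MetricSpace 𝒴] [CompactSpace 𝒴] [MeasurableSpace 𝒴] [BorelSpace 𝒴]
    {H : Type*} [NormedAddCommGroup H] [InnerProductSpace ℝ H] [CompleteSpace H]
    (Φ : 𝒴 → H) (hΦcont : Continuous Φ) (C : ℝ) (hΦbdd : ∀ y, ‖Φ y‖ ≤ C)
    (huniversal : ∀ (g : C(𝒴, ℝ)) (ε : ℝ), 0 < ε →
      ∃ f : H, ∀ y, |(inner ℝ f (Φ y) : ℝ) - g y| < ε)
    (P : Measure 𝒴) [IsProbabilityMeasure P]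
    (Pn : ℕ → Measure 𝒴) [∀ n, IsProbabilityMeasure (Pn n)]
    (hmmd : Tendsto (fun n => ‖(∫ y, Φ y ∂(Pn n)) - ∫ y, Φ y ∂P‖) atTop (nhds 0)) :
    ∀ f : C(𝒴, ℝ),
      Tendsto (fun n => ∫ y, f y ∂(Pn n)) atTop (nhds (∫ y, f y ∂P)) :=
  weak_convergence_of_mmd_tendsto_zero_general Φ hΦcont C huniversal P Pn hmmd
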